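/- Let Ω ⊆ ℂ be an unbounded domain (nonempty unbounded connected open set) and let J ⊆ ∂Ω be a nonempty compact set without isolated points. Let S(Ω,J) be the set of all f ∈ R̃(Ω) such that f has infinite difference quotients at every point z₀ ∈ J along J. Then S(Ω,J) is either empty or a dense Gδ subset of R̃(Ω). -/

import Mathlib

/-
Infinite difference quotients of `f` at `z₀` along `J` mean that `f z - f z₀` is not
`O(z - z₀)` along `J \ {z₀}`. This survives multiplying `f` by `c ≠ 0` and adding a function that
is `O(z - z₀)` there, such as a rational function without pole at `z₀`. So if `f₀ ∈ S`, then
`r + c • f₀ ∈ S` for every rational `r` and `c ≠ 0`; letting `c → 0` shows that `S` is dense.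
Moreover `S` is the intersection over `n` of the sets of `f` such that at every point of `J` some
difference quotient along `J` over a distance `< 1 / (n + 1)` exceeds `n + 1`. That condition is
open in `(f, z₀)` for a fixed witness, so by compactness of `J` (tube lemma) each of these sets is
open in the compact-open topology, and `S` is a `Gδ`.
-/

open scoped Classical in
/-- Extend a continuous map on `E` to all of `ℂ` by zero. -/
noncomputable def extendFn (E : Set ℂ) (f : C(E, ℂ)) : ℂ → ℂ :=
  fun z => if h : z ∈ E then f ⟨z, h⟩ else 0

/-- `f` has infinite difference quotients at `z₀` along `J`:
`limsup_{z → z₀, z ∈ J \ {z₀}} |f z - f z₀| / |z - z₀| = +∞`. -/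
def HasInfDiffQuot (f : ℂ → ℂ) (J : Set ℂ) (z₀ : ℂ) : Prop :=
  ∀ M > (0:ℝ), ∀ δ > (0:ℝ), ∃ z ∈ J,
    0 < ‖z - z₀‖ ∧ ‖z - z₀‖ < δ ∧
      M * ‖z - z₀‖ < ‖f z - f z₀‖

/-- Restrictions to `E` of rational functions with poles off `E`. -/
def ratRestrict (E : Set ℂ) : Set C(E, ℂ) :=
  {f | ∃ p q : Polynomial ℂ, (∀ z ∈ E, q.eval z ≠ 0) ∧
    ∀ z : E, f z = p.eval (z : ℂ) / q.eval (z : ℂ)}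

open Set Filter Topology Asymptotics

section extendFn

variable {E : Set ℂ}

lemma extendFn_of_mem (f : C(E, ℂ)) {z : ℂ} (hz : z ∈ E) : extendFn E f z = f ⟨z, hz⟩ :=
  dif_pos hz

lemma extendFn_add (f g : C(E, ℂ)) : extendFn E (f + g) = extendFn E f + extendFn E g := by
  ext z
  by_cases hz : z ∈ E <;> simp [extendFn, hz]

lemma extendFn_smul (c : ℂ) (f : C(E, ℂ)) : extendFn E (c • f) = c • extendFn E f := by
  ext z
  by_cases hz : z ∈ E <;> simp [extendFn, hz]

end extendFn

def DiffQuotExceeds (f : ℂ → ℂ) (J : Set ℂ) (z₀ : ℂ) (M δ : ℝ) : Prop :=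
  ∃ z ∈ J, 0 < ‖z - z₀‖ ∧ ‖z - z₀‖ < δ ∧ M * ‖z - z₀‖ < ‖f z - f z₀‖

section DiffQuot

variable {f g : ℂ → ℂ} {J : Set ℂ} {z₀ : ℂ}

lemma DiffQuotExceeds.mono {M M' δ δ' : ℝ} (h : DiffQuotExceeds f J z₀ M δ) (hM : M' ≤ M)
    (hδ : δ ≤ δ') : DiffQuotExceeds f J z₀ M' δ' := by
  obtain ⟨z, hzJ, hpos, hlt, hM'⟩ := h
  exact ⟨z, hzJ, hpos, hlt.trans_le hδ,
    (mul_le_mul_of_nonneg_right hM hpos.le).trans_lt hM'⟩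

lemma hasInfDiffQuot_iff_forall_nat :
    HasInfDiffQuot f J z₀ ↔ ∀ n : ℕ, DiffQuotExceeds f J z₀ (n + 1) (n + 1)⁻¹ := by
  refine ⟨fun h n => h _ (by positivity) _ (by positivity), fun h M hM δ hδ => ?_⟩
  obtain ⟨n, hn⟩ := exists_nat_gt (max M δ⁻¹)
  rw [max_lt_iff] at hn
  refine (h n).mono (by linarith) ?_
  calc ((n : ℝ) + 1)⁻¹ ≤ (δ⁻¹)⁻¹ := by gcongr; linarith
    _ = δ := inv_inv δ

lemma hasInfDiffQuot_iff_not_isBigO :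
    HasInfDiffQuot f J z₀ ↔
      ¬ (fun z => f z - f z₀) =O[𝓝[J \ {z₀}] z₀] (fun z => z - z₀) := by
  simp only [isBigO_iff, not_exists, not_eventually, not_le,
    Metric.nhdsWithin_basis_ball.frequently_iff, HasInfDiffQuot]
  refine ⟨fun h M δ hδ => ?_, fun h M _ δ hδ => ?_⟩
  · obtain ⟨z, hzJ, hpos, hlt, hM⟩ := h (max M 1) (by positivity) δ hδ
    exact ⟨z, ⟨by rwa [Metric.mem_ball, dist_eq_norm], hzJ, norm_sub_pos_iff.1 hpos⟩,
      (mul_le_mul_of_nonneg_right (le_max_left _ _) hpos.le).trans_lt hM⟩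
  · obtain ⟨z, ⟨hball, hzJ, hne⟩, hM⟩ := h M δ hδ
    exact ⟨z, hzJ, norm_sub_pos_iff.2 hne, by rwa [Metric.mem_ball, dist_eq_norm] at hball, hM⟩

lemma HasInfDiffQuot.add_smul_of_isBigO (hf : HasInfDiffQuot f J z₀)
    (hg : (fun z => g z - g z₀) =O[𝓝[J \ {z₀}] z₀] (fun z => z - z₀)) {c : ℂ} (hc : c ≠ 0) :
    HasInfDiffQuot (g + c • f) J z₀ := by
  rw [hasInfDiffQuot_iff_not_isBigO] at hf ⊢
  intro hsum
  refine hf ((isBigO_const_mul_left_iff hc).1 ((hsum.sub hg).congr_left fun z => ?_))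
  simp only [Pi.add_apply, Pi.smul_apply, smul_eq_mul]
  ring

end DiffQuot

lemma isOpen_setOf_forall_diffQuotExceeds {E J : Set ℂ} [LocallyCompactSpace E] (hJE : J ⊆ E)
    (hJ : IsCompact J) (M δ : ℝ) :
    IsOpen {f : C(E, ℂ) | ∀ z₀ ∈ J, DiffQuotExceeds (extendFn E f) J z₀ M δ} := by
  have hK : IsCompact (Subtype.val ⁻¹' J : Set E) :=
    Topology.IsInducing.subtypeVal.isCompact_preimage' hJ (by rwa [Subtype.range_val])
  refine isOpen_iff_eventually.2 fun f₀ hf₀ => ?_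
  have key : ∀ᶠ f in 𝓝 f₀, ∀ x ∈ (Subtype.val ⁻¹' J : Set E),
      DiffQuotExceeds (extendFn E f) J x M δ := by
    refine hK.eventually_forall_of_forall_eventually fun x hx => ?_
    obtain ⟨z, hzJ, hpos, hlt, hM⟩ := hf₀ x hx
    rw [extendFn_of_mem f₀ (hJE hzJ), extendFn_of_mem f₀ x.2] at hM
    have hopen : IsOpen {p : C(E, ℂ) × E | 0 < ‖z - p.2‖ ∧ ‖z - p.2‖ < δ ∧
        M * ‖z - p.2‖ < ‖p.1 ⟨z, hJE hzJ⟩ - p.1 p.2‖} := by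
      simp only [ofPred_and]
      exact (isOpen_lt (by fun_prop) (by fun_prop)).inter
        ((isOpen_lt (by fun_prop) (by fun_prop)).inter (isOpen_lt (by fun_prop) (by fun_prop)))
    refine Eventually.mono (hopen.mem_nhds (x := (f₀, x)) ⟨hpos, hlt, hM⟩) fun p hp => ?_
    rw [DiffQuotExceeds, extendFn_of_mem p.1 p.2.2]
    exact ⟨z, hzJ, by rwa [extendFn_of_mem p.1 (hJE hzJ)]⟩
  exact key.mono fun f hf z₀ hz₀ => hf ⟨z₀, hJE hz₀⟩ hz₀

lemma isGδ_setOf_forall_hasInfDiffQuot {E J : Set ℂ} [LocallyCompactSpace E] (hJE : J ⊆ E)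
    (hJ : IsCompact J) :
    IsGδ {f : C(E, ℂ) | ∀ z₀ ∈ J, HasInfDiffQuot (extendFn E f) J z₀} := by
  have hS : {f : C(E, ℂ) | ∀ z₀ ∈ J, HasInfDiffQuot (extendFn E f) J z₀} =
      ⋂ n : ℕ, {f | ∀ z₀ ∈ J, DiffQuotExceeds (extendFn E f) J z₀ (n + 1) (n + 1)⁻¹} := by
    ext f
    simp only [mem_ofPred_eq, mem_iInter, hasInfDiffQuot_iff_forall_nat]
    exact ⟨fun h n z hz => h z hz n, fun h z hz n => h n z hz⟩
  rw [hS]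
  exact .iInter fun n => (isOpen_setOf_forall_diffQuotExceeds hJE hJ _ _).isGδ

def ratSubmodule (E : Set ℂ) : Submodule ℂ C(E, ℂ) where
  carrier := ratRestrict E
  zero_mem' := ⟨0, 1, by simp, by simp⟩
  add_mem' := by
    rintro f g ⟨p₁, q₁, hq₁, hf⟩ ⟨p₂, q₂, hq₂, hg⟩
    refine ⟨p₁ * q₂ + p₂ * q₁, q₁ * q₂, fun z hz => ?_, fun z => ?_⟩
    · simpa using mul_ne_zero (hq₁ z hz) (hq₂ z hz)
    · have := hq₁ z z.2
      have := hq₂ z z.2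
      simp only [ContinuousMap.add_apply, hf z, hg z, Polynomial.eval_add, Polynomial.eval_mul]
      field_simp
  smul_mem' := by
    rintro c f ⟨p, q, hq, hf⟩
    exact ⟨Polynomial.C c * p, q, hq, fun z => by simp [hf z, mul_div_assoc]⟩

lemma isBigO_extendFn_sub_of_mem_ratRestrict {E : Set ℂ} {r : C(E, ℂ)} (hr : r ∈ ratRestrict E)
    {z₀ : ℂ} (hz₀ : z₀ ∈ E) :
    (fun z => extendFn E r z - extendFn E r z₀) =O[𝓝[E] z₀] (fun z => z - z₀) := by
  obtain ⟨p, q, hq, hr⟩ := hr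
  have hrat : (fun z => p.eval z / q.eval z - p.eval z₀ / q.eval z₀) =O[𝓝 z₀] (· - z₀) :=
    (p.differentiableAt.div q.differentiableAt (hq z₀ hz₀)).isBigO_sub
  refine (hrat.mono nhdsWithin_le_nhds).congr' (eventually_nhdsWithin_of_forall fun z hz => ?_) .rfl
  simp only [extendFn_of_mem r hz, extendFn_of_mem r hz₀, hr]

lemma hasInfDiffQuot_extendFn_add_smul {E J : Set ℂ} (hJE : J ⊆ E) {r f : C(E, ℂ)}
    (hr : r ∈ ratRestrict E) (hf : ∀ z₀ ∈ J, HasInfDiffQuot (extendFn E f) J z₀) {c : ℂ}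
    (hc : c ≠ 0) : ∀ z₀ ∈ J, HasInfDiffQuot (extendFn E (r + c • f)) J z₀ := fun z₀ hz₀ => by
  rw [extendFn_add, extendFn_smul]
  exact (hf z₀ hz₀).add_smul_of_isBigO ((isBigO_extendFn_sub_of_mem_ratRestrict hr (hJE hz₀)).mono
    (nhdsWithin_mono z₀ (sdiff_subset.trans hJE))) hc

theorem dichotomy_unbounded_general (Ω : Set ℂ)
    (J : Set ℂ) (hJfr : J ⊆ frontier Ω) (hJcpt : IsCompact J) :
    let R : Set C(closure Ω, ℂ) := closure (ratRestrict (closure Ω))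
    let S : Set ↥R :=
      {f | ∀ z₀ ∈ J, HasInfDiffQuot (extendFn (closure Ω) f.1) J z₀}
    S = ∅ ∨ (Dense S ∧ IsGδ S) := by
  intro R S
  have hJE : J ⊆ closure Ω := hJfr.trans frontier_subset_closure
  rcases S.eq_empty_or_nonempty with hS | ⟨f₀, hf₀⟩
  · exact Or.inl hS
  refine Or.inr ⟨Subtype.dense_iff.2 (closure_minimal (fun r hr => ?_) isClosed_closure), ?_⟩
  -- `R` is the carrier of `(ratSubmodule _).topologicalClosure`.
  · have hmem : ∀ c : ℂ, c ≠ 0 → r + c • f₀.1 ∈ Subtype.val '' S := fun c hc =>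
      ⟨⟨r + c • f₀.1, add_mem (Submodule.le_topologicalClosure (ratSubmodule _) hr)
        (Submodule.smul_mem _ c f₀.2)⟩, hasInfDiffQuot_extendFn_add_smul hJE hr hf₀ hc, rfl⟩
    have hlim : Tendsto (fun c : ℂ => r + c • f₀.1) (𝓝[≠] 0) (𝓝 r) := by
      have hcont : Continuous fun c : ℂ => r + c • f₀.1 := by fun_prop
      simpa [zero_smul ℂ f₀.1] using (hcont.tendsto 0).mono_left nhdsWithin_le_nhds
    exact mem_closure_of_tendsto hlim (eventually_nhdsWithin_of_forall hmem)
  · have : LocallyCompactSpace (closure Ω) := isClosed_closure.locallyCompactSpace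
    exact (isGδ_setOf_forall_hasInfDiffQuot hJE hJcpt).preimage continuous_subtype_val

/-- Let `Ω ⊆ ℂ` be an unbounded domain and `J ⊆ ∂Ω` a nonempty compact set without isolated
points.  Let `R̃(Ω)` be the closure in `C(cl Ω, ℂ)`, endowed with the topology of uniform
convergence on compact subsets of `cl Ω` (the compact-open topology), of the restrictions of
rational functions with poles off `cl Ω`, and let `S(Ω, J)` be the set of `f ∈ R̃(Ω)` having
infinite difference quotients at every point of `J` along `J`.  Then `S(Ω, J)` is either empty
or a dense `Gδ` subset of `R̃(Ω)`. -/
theorem dichotomy_unbounded (Ω : Set ℂ) (hΩopen : IsOpen Ω) (hΩconn : IsConnected Ω)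
    (hΩunbdd : ¬ Bornology.IsBounded Ω)
    (J : Set ℂ) (hJne : J.Nonempty) (hJfr : J ⊆ frontier Ω) (hJcpt : IsCompact J)
    (hJperf : ∀ z ∈ J, z ∈ closure (J \ {z})) :
    let R : Set C(closure Ω, ℂ) := closure (ratRestrict (closure Ω))
    let S : Set ↥R :=
      {f | ∀ z₀ ∈ J, HasInfDiffQuot (extendFn (closure Ω) f.1) J z₀}
    S = ∅ ∨ (Dense S ∧ IsGδ S) :=
  dichotomy_unbounded_general Ω J hJfr hJcpt
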